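/- arXiv:2304.03310 — 5 statements merged into one kernel-verified Lean document; each statement's English description precedes it below -/
import Mathlib

section
/- Let r, s ∈ ℤ and M ≥ 1, and define G(r,s,2M) = ∑_{x=0}^{2M−1} exp(2πi(rx²+sx)/(2M)) and G̃(r,s,M) = ∑_{x=0}^{M−1} exp(πi(rx²+sx)/M). Then G(r,s,2M) = (1 + (−1)^{Mr+s})·G̃(r,s,M). In particular G(r,s,2M) = 0 whenever Mr + s is odd. -/
open Complex
open scoped Real

theorem Finset.sum_range_two_mul_of_map_add {R : Type*} [CommSemiring R] (f : ℕ → R) (M : ℕ)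
    (c : R) (hf : ∀ x, f (M + x) = c * f x) :
    ∑ x ∈ range (2 * M), f x = (1 + c) * ∑ x ∈ range M, f x := by
  simp only [two_mul, sum_range_add, hf, ← mul_sum]
  ring

/-- Shifting `x` by `M` adds `2 r x + (M r + s)` to the phase `(r x² + s x) / M`; the first
summand is an even integer and so only the sign `(-1) ^ (M r + s)` survives. -/
theorem exp_pi_mul_I_quadratic_add_period (r s x : ℤ) {M : ℕ} (hM : M ≠ 0) :
    exp (π * I * (r * ((x + M : ℤ) : ℂ) ^ 2 + s * ((x + M : ℤ) : ℂ)) / M) =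
      (-1 : ℂ) ^ ((M : ℤ) * r + s) * exp (π * I * (r * (x : ℂ) ^ 2 + s * x) / M) := by
  have hphase : π * I * (r * ((x + M : ℤ) : ℂ) ^ 2 + s * ((x + M : ℤ) : ℂ)) / M =
      π * I * (r * (x : ℂ) ^ 2 + s * x) / M + ((M * r + s : ℤ) : ℂ) * (π * I) +
        ((r * x : ℤ) : ℂ) * (2 * π * I) := by
    push_cast
    field_simp
    ring
  rw [hphase, exp_add, exp_add, exp_int_mul, exp_int_mul, exp_pi_mul_I, exp_two_pi_mul_I,
    one_zpow, mul_one, mul_comm]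

theorem stmt9_general (r s : ℤ) (M : ℕ) :
    (∑ x ∈ Finset.range (2 * M),
        Complex.exp (2 * Real.pi * Complex.I *
          ((r : ℂ) * (x : ℂ) ^ 2 + (s : ℂ) * (x : ℂ)) / (2 * M))) =
      (1 + (-1 : ℂ) ^ ((M : ℤ) * r + s)) *
        ∑ x ∈ Finset.range M,
          Complex.exp (Real.pi * Complex.I *
            ((r : ℂ) * (x : ℂ) ^ 2 + (s : ℂ) * (x : ℂ)) / M) ∧
    (Odd ((M : ℤ) * r + s) →
      (∑ x ∈ Finset.range (2 * M),
        Complex.exp (2 * Real.pi * Complex.I *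
          ((r : ℂ) * (x : ℂ) ^ 2 + (s : ℂ) * (x : ℂ)) / (2 * M))) = 0) := by
  rcases eq_or_ne M 0 with rfl | hM
  · simp
  have hhalf : ∀ q : ℂ, 2 * π * I * q / (2 * M) = π * I * q / M := fun q => by
    field_simp
  have hsplit := Finset.sum_range_two_mul_of_map_add
    (fun x : ℕ => exp (π * I * (r * (x : ℂ) ^ 2 + s * x) / M)) M ((-1) ^ ((M : ℤ) * r + s))
    fun x => by simpa [add_comm] using exp_pi_mul_I_quadratic_add_period r s x hM
  simp only [hhalf]
  refine ⟨hsplit, fun hodd => ?_⟩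
  rw [hsplit, hodd.neg_one_zpow, add_neg_cancel, zero_mul]

theorem stmt9 (r s : ℤ) (M : ℕ) (hM : 1 ≤ M) :
    (∑ x ∈ Finset.range (2 * M),
        Complex.exp (2 * Real.pi * Complex.I *
          ((r : ℂ) * (x : ℂ) ^ 2 + (s : ℂ) * (x : ℂ)) / (2 * M))) =
      (1 + (-1 : ℂ) ^ ((M : ℤ) * r + s)) *
        ∑ x ∈ Finset.range M,
          Complex.exp (Real.pi * Complex.I *
            ((r : ℂ) * (x : ℂ) ^ 2 + (s : ℂ) * (x : ℂ)) / M) ∧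
    (Odd ((M : ℤ) * r + s) →
      (∑ x ∈ Finset.range (2 * M),
        Complex.exp (2 * Real.pi * Complex.I *
          ((r : ℂ) * (x : ℂ) ^ 2 + (s : ℂ) * (x : ℂ)) / (2 * M))) = 0) :=
  stmt9_general r s M
end

section
/- Let N be an odd positive integer and r an integer with gcd(r,N) = 1. Then |G(r,0,N)|² = N, where G(r,0,N) = ∑_{x=0}^{N−1} exp(2πi·r·x²/N). That is, the absolute value of the quadratic Gauss sum with invertible coefficient and odd modulus is √N. -/
/-!
Write `ψ x = e^{2πi r x / N}`, a primitive additive character of `ZMod N` since `r` is a unit.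
Then `|G|² = ∑_{x,y} ψ(x² - y²)`, and the substitution `x = y + t` turns this into
`∑_t ψ(t²) ∑_y ψ(2ty)`. The inner sum is `N` if `2t = 0` and `0` otherwise, and `2t = 0` forces
`t = 0` because `2` is invertible modulo the odd number `N`.
-/

open Finset

namespace AddChar

variable {R : Type*} [CommRing R]

lemma IsPrimitive.mulShift_of_isUnit {R' : Type*} [CommMonoid R'] {ψ : AddChar R R'}
    (hψ : ψ.IsPrimitive) {a : R} (ha : IsUnit a) : (ψ.mulShift a).IsPrimitive := by
  intro b hb
  rw [mulShift_mulShift]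
  exact hψ fun hab => hb (ha.mul_right_eq_zero.mp hab)

lemma norm_sq_sum_apply_sq [Fintype R] {ψ : AddChar R ℂ} (hψ : ψ.IsPrimitive)
    (h2 : IsUnit (2 : R)) : ‖∑ x, ψ (x ^ 2)‖ ^ 2 = Fintype.card R := by
  classical
  suffices (∑ x, ψ (x ^ 2)) * starRingEnd ℂ (∑ y, ψ (y ^ 2)) = Fintype.card R by
    exact_mod_cast (Complex.mul_conj' _).symm.trans this
  calc (∑ x, ψ (x ^ 2)) * starRingEnd ℂ (∑ y, ψ (y ^ 2))
      = ∑ y, ∑ x, ψ (x ^ 2 - y ^ 2) := by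
        simp only [map_sum, ← map_neg_eq_conj, sum_mul_sum, ← map_add_eq_mul, sub_eq_add_neg]
        exact sum_comm
    _ = ∑ y, ∑ t, ψ (t ^ 2) * ψ (y * (2 * t)) := by
        refine sum_congr rfl fun y _ => ?_
        rw [← Fintype.sum_equiv (Equiv.addLeft y) _ _ fun _ => rfl]
        refine sum_congr rfl fun t _ => ?_
        rw [← map_add_eq_mul, Equiv.coe_addLeft]
        ring_nf
    _ = ∑ t, ψ (t ^ 2) * ∑ y, ψ (y * (2 * t)) := by
        rw [sum_comm]
        simp only [← mul_sum]
    _ = Fintype.card R := by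
        simp [sum_mulShift _ hψ, h2.mul_right_eq_zero]

end AddChar

lemma ZMod.sum_range_natCast {M : Type*} [AddCommMonoid M] (N : ℕ) [NeZero N]
    (f : ZMod N → M) : ∑ x ∈ range N, f x = ∑ x : ZMod N, f x :=
  sum_nbij' (fun x => (x : ZMod N)) ZMod.val (by simp) (by simp [ZMod.val_lt])
    (fun _ hx => ZMod.val_cast_of_lt (mem_range.mp hx)) (fun x _ => ZMod.natCast_zmod_val x)
    (fun _ _ => rfl)

theorem stmt11_general (N : ℕ) (hodd : Odd N) (r : ℤ) (hr : Int.gcd r N = 1) :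
    ‖∑ x ∈ Finset.range N,
        Complex.exp (2 * Real.pi * Complex.I * (r : ℂ) * (x : ℂ) ^ 2 / N)‖ ^ 2
      = (N : ℝ) := by
  have : NeZero N := ⟨hodd.pos.ne'⟩
  have hr_unit : IsUnit (r : ZMod N) := by
    simpa [isCoprime_zero_right] using
      (Int.isCoprime_iff_gcd_eq_one.mpr hr).map (Int.castRingHom (ZMod N))
  have h2_unit : IsUnit (2 : ZMod N) := by
    exact_mod_cast (ZMod.isUnit_iff_coprime 2 N).mpr (Nat.coprime_two_left.mpr hodd)
  have hsum : ∑ x ∈ range N, Complex.exp (2 * Real.pi * Complex.I * (r : ℂ) * (x : ℂ) ^ 2 / N)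
      = ∑ x : ZMod N, (ZMod.stdAddChar.mulShift (r : ZMod N)) (x ^ 2) := by
    rw [← ZMod.sum_range_natCast]
    refine sum_congr rfl fun x _ => ?_
    rw [AddChar.mulShift_apply,
      show (r : ZMod N) * (x : ZMod N) ^ 2 = ((r * x ^ 2 : ℤ) : ZMod N) by push_cast; rfl,
      ZMod.stdAddChar_coe]
    push_cast
    ring_nf
  rw [hsum, AddChar.norm_sq_sum_apply_sq
    ((ZMod.isPrimitive_stdAddChar N).mulShift_of_isUnit hr_unit) h2_unit, ZMod.card]

theorem stmt11 (N : ℕ) (hN : 1 ≤ N) (hodd : Odd N) (r : ℤ) (hr : Int.gcd r N = 1) :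
    ‖∑ x ∈ Finset.range N,
        Complex.exp (2 * Real.pi * Complex.I * (r : ℂ) * (x : ℂ) ^ 2 / N)‖ ^ 2
      = (N : ℝ) :=
  stmt11_general N hodd r hr
end

section
/- Let D ≥ 2, L = −⌊(D−1)/2⌋, U = ⌊D/2⌋, σ = L + U, and let ρ : ℤ → [L,U] send each integer to its unique representative modulo D in the interval [L,U]. Then for every x ∈ [L,U], the integer x · ρ(σ − 1 − x) equals U² if and only if x = U. -/
/-!
For `x < U` the argument `σ - 1 - x` already lies in the window `[L, U]`, so `ρ` fixes it, and
since `σ ∈ {0, 1}` the factors `x` and `σ - 1 - x` never have the same strict sign: the product is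
`≤ 0 < U²`. For `x = U` the argument is `L - 1 = U - D`, which `ρ` wraps around to `U`.
-/

namespace Int

theorem emod_sub_add_of_le_of_lt {z L D : ℤ} (hLz : L ≤ z) (hzD : z < L + D) :
    (z - L) % D + L = z := by
  rw [Int.emod_eq_of_lt (by omega) (by omega), sub_add_cancel]

theorem emod_sub_sub_add_of_le_of_lt {z L D : ℤ} (hLz : L ≤ z) (hzD : z < L + D) :
    (z - D - L) % D + L = z := by
  rw [sub_right_comm, Int.sub_emod_right, emod_sub_add_of_le_of_lt hLz hzD]

theorem mul_sub_one_sub_self_nonpos {s : ℤ} (hs₀ : 0 ≤ s) (hs₁ : s ≤ 1) (x : ℤ) :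
    x * (s - 1 - x) ≤ 0 := by
  rcases le_or_gt x (-1) with hx | hx
  · exact mul_nonpos_of_nonpos_of_nonneg (by omega) (by omega)
  · exact mul_nonpos_of_nonneg_of_nonpos (by omega) (by omega)

end Int

theorem stmt13 (D : ℤ) (hD : 2 ≤ D) :
    let L : ℤ := -((D - 1) / 2)
    let U : ℤ := D / 2
    let σ : ℤ := L + U
    let ρ : ℤ → ℤ := fun z => (z - L) % D + L
    ∀ x : ℤ, L ≤ x → x ≤ U →
      (x * ρ (σ - 1 - x) = U ^ 2 ↔ x = U) := by
  intro L U σ ρ x hLx hxU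
  have hσ : 0 ≤ σ ∧ σ ≤ 1 := by omega
  constructor
  · intro h
    by_contra hxU'
    have hρ : ρ (σ - 1 - x) = σ - 1 - x := Int.emod_sub_add_of_le_of_lt (by omega) (by omega)
    rw [hρ] at h
    linarith [Int.mul_sub_one_sub_self_nonpos hσ.1 hσ.2 x, pow_pos (by omega : (0 : ℤ) < U) 2]
  · rintro rfl
    have hρ : ρ (σ - 1 - U) = U :=
      (congrArg (· % D + L) (by omega : σ - 1 - U - L = U - D - L)).trans
        (Int.emod_sub_sub_add_of_le_of_lt (by omega) (by omega))
    rw [hρ, sq]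
end

section
/- Let D ≥ 2, L = −⌊(D−1)/2⌋, U = ⌊D/2⌋, σ = L+U, and ρ : ℤ → [L,U] the reduction mod D into [L,U]. Then for every m ≥ 1 and every tuple (x_1,…,x_m) ∈ [L,U]^m, the integer product ∏_{j=1}^m ( x_j · ρ(σ − 1 − x_j) ) equals U^{2m} if and only if x_j = U for all j. -/
/-!
For `x ∈ [L, U]` we have `|x| ≤ U` and `|ρ z| ≤ U`, so every factor `x * ρ (σ - 1 - x)` has
absolute value at most `U²`. For `x = U` the partner is `ρ (L - 1) = U`, giving exactly `U²`;
for every other `x` the factor is strictly smaller in absolute value (when `x = -U = L`, the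
partner is `U - 1`). A product of such factors equals `(U²)^m` only if every factor is `U²`.
-/

open Finset

theorem Finset.prod_eq_pow_card_iff_of_abs_lt {ι R : Type*} [CommRing R] [LinearOrder R]
    [IsStrictOrderedRing R] {s : Finset ι} {f : ι → R} {c : R} {p : ι → Prop}
    (hp : ∀ i ∈ s, p i → f i = c) (hnp : ∀ i ∈ s, ¬ p i → |f i| < c) :
    ∏ i ∈ s, f i = c ^ #s ↔ ∀ i ∈ s, p i := by
  classical
  constructor
  · intro hprod
    by_contra! ⟨j, hj, hpj⟩
    have hfj := hnp j hj hpj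
    have hc : 0 < c := (abs_nonneg _).trans_lt hfj
    have hle : ∀ i ∈ s, |f i| ≤ c := fun i hi => by
      by_cases hpi : p i
      · rw [hp i hi hpi, abs_of_pos hc]
      · exact (hnp i hi hpi).le
    have hrest : |∏ i ∈ s.erase j, f i| ≤ c ^ #(s.erase j) := by
      rw [abs_prod, ← prod_const]
      exact prod_le_prod (fun i _ => abs_nonneg _) fun i hi => hle i (mem_of_mem_erase hi)
    have : |∏ i ∈ s, f i| < c ^ #s :=
      calc |∏ i ∈ s, f i| = |f j| * |∏ i ∈ s.erase j, f i| := by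
            rw [← mul_prod_erase s f hj, abs_mul]
        _ < c * c ^ #(s.erase j) :=
            mul_lt_mul_of_lt_of_le_of_nonneg_of_pos hfj hrest (abs_nonneg _) (by positivity)
        _ = c ^ #s := by rw [← pow_succ', card_erase_add_one hj]
    rw [hprod, abs_of_pos (by positivity)] at this
    exact this.false
  · intro hall
    rw [prod_congr rfl fun i hi => hp i hi (hall i hi), prod_const]

def balancedMod (L D z : ℤ) : ℤ := (z - L) % D + L

section balancedMod

variable {L D : ℤ}

theorem balancedMod_mem_Icc (hD : 0 < D) (z : ℤ) :
    balancedMod L D z ∈ Set.Icc L (L + D - 1) := by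
  have := Int.emod_nonneg (z - L) hD.ne'
  have := Int.emod_lt_of_pos (z - L) hD
  constructor <;> simp only [balancedMod] <;> omega

theorem balancedMod_eq_self {z : ℤ} (hLz : L ≤ z) (hzD : z < L + D) :
    balancedMod L D z = z := by
  rw [balancedMod, Int.emod_eq_of_lt (by omega) (by omega)]
  ring

theorem balancedMod_sub_one (hD : 0 < D) : balancedMod L D (L - 1) = L + D - 1 := by
  rw [balancedMod, show L - 1 - L = D - 1 + D * (-1) by ring, Int.add_mul_emod_self_left,
    Int.emod_eq_of_lt (by omega) (by omega)]
  ring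

end balancedMod

section factor

variable {L U D : ℤ}

theorem mul_balancedMod_eq_sq (hD : L + D = U + 1) (hD0 : 0 < D) :
    U * balancedMod L D (L + U - 1 - U) = U ^ 2 := by
  rw [show L + U - 1 - U = L - 1 by ring, balancedMod_sub_one hD0, show L + D - 1 = U by omega, sq]

theorem abs_mul_balancedMod_lt_sq (hD : L + D = U + 1) (hU : 0 < U) (hL : -U ≤ L) {x : ℤ}
    (hLx : L ≤ x) (hxU : x < U) : |x * balancedMod L D (L + U - 1 - x)| < U ^ 2 := by
  obtain ⟨hρL, hρU⟩ := balancedMod_mem_Icc (L := L) (by omega : 0 < D) (L + U - 1 - x)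
  by_cases hx : x = -U
  · -- here `L = -U`, so the partner `U - 1` already lies in `[L, U]`
    subst hx
    rw [show L + U - 1 - -U = U - 1 by omega, balancedMod_eq_self (by omega) (by omega),
      abs_of_nonpos (by nlinarith)]
    nlinarith
  · calc |x * balancedMod L D (L + U - 1 - x)|
        = |x| * |balancedMod L D (L + U - 1 - x)| := abs_mul _ _
      _ ≤ (U - 1) * U :=
          mul_le_mul (abs_le.2 ⟨by omega, by omega⟩) (abs_le.2 ⟨by omega, by omega⟩)
            (abs_nonneg _) (by omega)
      _ < U ^ 2 := by nlinarith

end factor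

theorem stmt14 (D : ℤ) (hD : 2 ≤ D) :
    let L : ℤ := -((D - 1) / 2)
    let U : ℤ := D / 2
    let σ : ℤ := L + U
    let ρ : ℤ → ℤ := fun z => (z - L) % D + L
    ∀ m : ℕ, 1 ≤ m → ∀ x : Fin m → ℤ,
      (∀ j, L ≤ x j ∧ x j ≤ U) →
      ((∏ j, (x j * ρ (σ - 1 - x j))) = U ^ (2 * m) ↔ ∀ j, x j = U) := by
  intro L U σ ρ m _ x hx
  have hLD : L + D = U + 1 := by omega
  have hU : 0 < U := by omega
  have hL : -U ≤ L := by omega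
  have key := prod_eq_pow_card_iff_of_abs_lt (s := univ) (c := U ^ 2) (p := fun j => x j = U)
    (f := fun j => x j * ρ (σ - 1 - x j))
    (fun j _ hj => by rw [hj]; exact mul_balancedMod_eq_sq hLD (by omega))
    (fun j _ hj => abs_mul_balancedMod_lt_sq hLD hU hL (hx j).1 (lt_of_le_of_ne (hx j).2 hj))
  rw [pow_mul]
  simpa only [mem_univ, forall_const, card_univ, Fintype.card_fin] using key
end

section
/- Let D ≥ 1, ω = exp(2πi/D), τ = exp(πi(D²+1)/D), and for k ∈ ℤ let |ω^k⟩ = (1/√D)·∑_{x=0}^{D−1} ω^{−kx}|x⟩ ∈ ℂ^D. Define Z = ∑_{x=0}^{D−1} ω^x |x⟩⟨x| and, for integers a, b, the operator R(a,b) = (1/√D)·∑_{x=0}^{D−1} τ^{2ax+bx²} |ω^{−x}⟩⟨ω^{x}|. Then for every integer c, Z^c · R(a,b) · Z^c = τ^{−2ac + bc²} · R(a − bc, b). -/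
/-!
Conjugating by the diagonal matrix `Z ^ c` multiplies the `(i, j)` entry of `R a b` by
`ω ^ (c * (i + j))`, i.e. it replaces the summation index `x` of the Fourier factor by `x + c`.
Because `τ ^ (2 * D) = τ ^ (D * D) = ω ^ D = 1`, the summand is `D`-periodic in `x`, so the sum over
a full period is invariant under this shift, and expanding `2 a (x - c) + b (x - c) ^ 2` produces the
phase `τ ^ (-2 a c + b c ^ 2)` and the new parameter `a - b c`.
-/

open Finset Function

theorem Function.Periodic.sum_range_comp_add_one {M : Type*} [AddCancelCommMonoid M] {f : ℤ → M}
    {n : ℕ} (hf : Periodic f n) : ∑ x ∈ range n, f (x + 1) = ∑ x ∈ range n, f x := by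
  have h := (sum_range_succ' (fun x : ℕ => f x) n).symm.trans (sum_range_succ _ n)
  push_cast at h
  rw [← zero_add (n : ℤ), hf 0] at h
  exact add_right_cancel h

theorem Function.Periodic.sum_range_comp_add {M : Type*} [AddCancelCommMonoid M] {f : ℤ → M}
    {n : ℕ} (hf : Periodic f n) (c : ℤ) : ∑ x ∈ range n, f (x + c) = ∑ x ∈ range n, f x := by
  induction c using Int.induction_on with
  | zero => simp
  | succ c ih =>
    rw [← ih, ← (hf.add_const c).sum_range_comp_add_one]
    simp only [add_assoc, add_comm (1 : ℤ)]
  | pred c ih =>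
    rw [← ih, ← (hf.add_const (-c - 1)).sum_range_comp_add_one]
    simp only [add_assoc, add_sub_cancel]

theorem Matrix.diagonal_zpow {n K : Type*} [Fintype n] [DecidableEq n] [Field K] {v : n → K}
    (hv : ∀ i, v i ≠ 0) (c : ℤ) : diagonal v ^ c = diagonal fun i => v i ^ c := by
  rcases c with k | k
  · simp [diagonal_pow, Pi.pow_def]
  · rw [zpow_negSucc, diagonal_pow]
    refine inv_eq_right_inv ?_
    rw [diagonal_mul_diagonal, ← diagonal_one]
    congr 1
    ext i
    simp [zpow_negSucc, hv i]

theorem Complex.exp_pi_mul_I_div_zpow_eq_one {D : ℕ} (hD : D ≠ 0) {k N : ℤ} (hkN : Even (k * N)) :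
    exp (Real.pi * I * N / D) ^ (k * D) = 1 := by
  obtain ⟨m, hm⟩ := hkN
  rw [← exp_int_mul, ← exp_int_mul_two_pi_mul_I m]
  congr 1
  have hm' : (k : ℂ) * N = m + m := by exact_mod_cast hm
  have hD' : (D : ℂ) ≠ 0 := Nat.cast_ne_zero.mpr hD
  push_cast
  field_simp
  linear_combination hm'

theorem sum_zpow_quadratic_mul_zpow_add_eq {K : Type*} [DivisionRing K] {D : ℕ} {τ ω : K}
    (hτ : τ ≠ 0) (hω : ω ≠ 0) (hτ2D : τ ^ (2 * (D : ℤ)) = 1) (hτDD : τ ^ ((D : ℤ) * D) = 1)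
    (hωD : ω ^ (D : ℤ) = 1) (a b c m : ℤ) :
    ∑ x ∈ range D, τ ^ (2 * a * x + b * x ^ 2) * ω ^ ((x + c) * m) =
      τ ^ (-2 * a * c + b * c ^ 2) *
        ∑ x ∈ range D, τ ^ (2 * (a - b * c) * x + b * x ^ 2) * ω ^ ((x : ℤ) * m) := by
  set F : ℤ → K := fun y => τ ^ (-2 * a * c + b * c ^ 2 + (2 * (a - b * c) * y + b * y ^ 2)) *
    ω ^ (y * m) with hF
  have hFper : Periodic F D := fun y => by
    simp only [hF]
    rw [show -2 * a * c + b * c ^ 2 + (2 * (a - b * c) * (y + D) + b * (y + D) ^ 2)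
        = -2 * a * c + b * c ^ 2 + (2 * (a - b * c) * y + b * y ^ 2) + 2 * D * (a - b * c + b * y)
          + D * D * b by ring, add_mul, zpow_add₀ hτ, zpow_add₀ hτ, zpow_add₀ hω,
      zpow_mul τ (2 * D), zpow_mul τ (D * D), zpow_mul ω D, hτ2D, hτDD, hωD]
    simp
  calc ∑ x ∈ range D, τ ^ (2 * a * x + b * x ^ 2) * ω ^ ((x + c) * m)
      = ∑ x ∈ range D, F (x + c) := sum_congr rfl fun x _ => by simp only [hF]; ring_nf
    _ = ∑ x ∈ range D, F x := hFper.sum_range_comp_add c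
    _ = _ := by
      rw [mul_sum]
      exact sum_congr rfl fun x _ => by simp only [hF]; rw [zpow_add₀ hτ, mul_assoc]

theorem stmt17 (D : ℕ) (hD : 1 ≤ D) (a b c : ℤ) :
    let ω : ℂ := Complex.exp (2 * Real.pi * Complex.I / D)
    let τ : ℂ := Complex.exp (Real.pi * Complex.I * ((D : ℂ) ^ 2 + 1) / D)
    -- Fourier basis kets and bras: |ω^k⟩ and ⟨ω^k|
    let ket : ℤ → Fin D → ℂ := fun k x => (1 / (Real.sqrt D : ℂ)) * ω ^ (-(k * ((x : ℕ) : ℤ)))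
    let bra : ℤ → Fin D → ℂ := fun k y => (1 / (Real.sqrt D : ℂ)) * ω ^ (k * ((y : ℕ) : ℤ))
    -- generalized Pauli Z
    let Z : Matrix (Fin D) (Fin D) ℂ := Matrix.diagonal fun x => ω ^ ((x : ℕ) : ℤ)
    -- red dot with stabiliser phase [a;b]
    let R : ℤ → ℤ → Matrix (Fin D) (Fin D) ℂ := fun a b =>
      (1 / (Real.sqrt D : ℂ)) •
        ∑ x ∈ Finset.range D,
          (τ ^ (2 * a * (x : ℤ) + b * (x : ℤ) ^ 2)) •
            Matrix.vecMulVec (ket (-(x : ℤ))) (bra (x : ℤ))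
    Z ^ c * R a b * Z ^ c = (τ ^ (-2 * a * c + b * c ^ 2)) • R (a - b * c) b := by
  intro ω τ ket bra Z R
  have hD0 : D ≠ 0 := by omega
  have hω : ω ≠ 0 := Complex.exp_ne_zero _
  have hτ : τ ≠ 0 := Complex.exp_ne_zero _
  have hτN : τ = Complex.exp (Real.pi * Complex.I * ((D ^ 2 + 1 : ℤ) : ℂ) / D) := by push_cast; rfl
  have hτ2D : τ ^ (2 * (D : ℤ)) = 1 :=
    hτN ▸ Complex.exp_pi_mul_I_div_zpow_eq_one hD0 (even_two_mul _)
  have hτDD : τ ^ ((D : ℤ) * D) = 1 :=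
    hτN ▸ Complex.exp_pi_mul_I_div_zpow_eq_one hD0 (by
      rcases Int.even_or_odd (D : ℤ) with h | h
      exacts [h.mul_right _, h.pow.add_one.mul_left _])
  have hωD : ω ^ (D : ℤ) = 1 := by
    rw [zpow_natCast]; exact (Complex.isPrimitiveRoot_exp D hD0).pow_eq_one
  have hZ : Z ^ c = Matrix.diagonal fun x : Fin D => ω ^ (((x : ℕ) : ℤ) * c) := by
    simp only [Z, Matrix.diagonal_zpow (fun _ => zpow_ne_zero _ hω), zpow_mul]
  set s : ℂ := 1 / (Real.sqrt D : ℂ)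
  have hR : ∀ a b i j, R a b i j =
      s ^ 3 * ∑ x ∈ range D, τ ^ (2 * a * x + b * x ^ 2) * ω ^ ((x : ℤ) * (i + j : ℕ)) := by
    intro a b i j
    simp only [R, ket, bra, Matrix.smul_apply, Matrix.sum_apply, Matrix.vecMulVec_apply,
      smul_eq_mul, mul_sum]
    refine sum_congr rfl fun x _ => ?_
    rw [neg_mul, neg_neg, Nat.cast_add, mul_add, zpow_add₀ hω]
    ring
  ext i j
  calc (Z ^ c * R a b * Z ^ c) i j
      = s ^ 3 * ∑ x ∈ range D,
          τ ^ (2 * a * x + b * x ^ 2) * ω ^ (((x : ℤ) + c) * (i + j : ℕ)) := by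
        rw [hZ, Matrix.mul_diagonal, Matrix.diagonal_mul, hR]
        simp only [mul_sum, sum_mul]
        refine sum_congr rfl fun x _ => ?_
        rw [add_mul, zpow_add₀ hω, Nat.cast_add, mul_add c, zpow_add₀ hω, mul_comm c,
          mul_comm c]
        ring
    _ = _ := by
        rw [sum_zpow_quadratic_mul_zpow_add_eq hτ hω hτ2D hτDD hωD, Matrix.smul_apply, hR,
          smul_eq_mul, mul_left_comm]
end
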